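/- arXiv:1807.11653 — 2 statements merged into one kernel-verified Lean document; each statement's English description precedes it below -/
import Mathlib

section
/- Let X = ∂/∂x + 2y ∂/∂t. For u₀(x,y,t) = log((x²/a² + y²/b²)² + t²/(a²b²))/(4 log A), in Korányi ellipsoidal coordinates (x,y,t) = (a r √(sin φ) cos θ, b r √(sin φ) sin θ, a b r² cos φ), one has X u₀ = √(sin φ) sin(φ+θ) / (a r log A). -/
/-!
`u₀ = log N / log A` for the anisotropic Korányi gauge `N = Q^{1/4}`, so `X u₀ = X Q / (4 Q log A)`,
and `X Q = 4 (x (x²/a² + y²/b²)/a² + y t/(a²b²))` because `X = ∂ₓ + 2y ∂ₜ`. In ellipsoidal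
coordinates `Q = r⁴`, `x²/a² + y²/b² = r² sin φ`, and the bracket collapses to
`r³ √(sin φ) (sin φ cos θ + cos φ sin θ) / a = r³ √(sin φ) sin (φ + θ) / a`.
-/

open Real

/-- The fourth power of the anisotropic Korányi gauge on `ℍ¹`. -/
noncomputable def koranyiGaugePow4 (a b x y t : ℝ) : ℝ :=
  (x ^ 2 / a ^ 2 + y ^ 2 / b ^ 2) ^ 2 + t ^ 2 / (a ^ 2 * b ^ 2)

/-- `X f (x, y, t)` for `X = ∂/∂x + 2y ∂/∂t`. -/
noncomputable def horizX (f : ℝ × ℝ × ℝ → ℝ) (x y t : ℝ) : ℝ :=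
  deriv (fun s => f (x + s, y, t)) 0 + 2 * y * deriv (fun s => f (x, y, t + s)) 0

theorem horizX_div_const (f : ℝ × ℝ × ℝ → ℝ) (c x y t : ℝ) :
    horizX (fun p => f p / c) x y t = horizX f x y t / c := by
  simp only [horizX, deriv_div_const]
  ring

theorem hasDerivAt_koranyiGaugePow4_x (a b x y t : ℝ) :
    HasDerivAt (fun s => koranyiGaugePow4 a b s y t)
      (4 * x * (x ^ 2 / a ^ 2 + y ^ 2 / b ^ 2) / a ^ 2) x := by
  have h := ((((hasDerivAt_pow 2 x).div_const (a ^ 2)).add_const (y ^ 2 / b ^ 2)).pow 2).add_const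
    (t ^ 2 / (a ^ 2 * b ^ 2))
  exact h.congr_deriv (by ring)

theorem hasDerivAt_koranyiGaugePow4_t (a b x y t : ℝ) :
    HasDerivAt (fun s => koranyiGaugePow4 a b x y s) (2 * t / (a ^ 2 * b ^ 2)) t := by
  have h := ((hasDerivAt_pow 2 t).div_const (a ^ 2 * b ^ 2)).const_add
    ((x ^ 2 / a ^ 2 + y ^ 2 / b ^ 2) ^ 2)
  exact h.congr_deriv (by ring)

theorem horizX_log_koranyiGaugePow4 (a b x y t : ℝ) (hQ : koranyiGaugePow4 a b x y t ≠ 0) :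
    horizX (fun p => log (koranyiGaugePow4 a b p.1 p.2.1 p.2.2)) x y t =
      4 * (x * (x ^ 2 / a ^ 2 + y ^ 2 / b ^ 2) / a ^ 2 + y * t / (a ^ 2 * b ^ 2)) /
        koranyiGaugePow4 a b x y t := by
  have hx := HasDerivAt.comp_const_add x 0
    (by rw [add_zero]; exact (hasDerivAt_koranyiGaugePow4_x a b x y t).log hQ)
  have ht := HasDerivAt.comp_const_add t 0
    (by rw [add_zero]; exact (hasDerivAt_koranyiGaugePow4_t a b x y t).log hQ)
  rw [horizX, hx.deriv, ht.deriv]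
  field_simp
  ring

section Ellipsoidal

variable {a b r φ θ : ℝ}

theorem sq_div_add_sq_div_ellipsoidal (ha : a ≠ 0) (hb : b ≠ 0) (hφ : 0 ≤ sin φ) :
    (a * r * √(sin φ) * cos θ) ^ 2 / a ^ 2 + (b * r * √(sin φ) * sin θ) ^ 2 / b ^ 2 =
      r ^ 2 * sin φ := by
  field_simp
  rw [sq_sqrt hφ]
  linear_combination r ^ 2 * sin φ * sin_sq_add_cos_sq θ

theorem koranyiGaugePow4_ellipsoidal (ha : a ≠ 0) (hb : b ≠ 0) (hφ : 0 ≤ sin φ) :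
    koranyiGaugePow4 a b (a * r * √(sin φ) * cos θ) (b * r * √(sin φ) * sin θ)
      (a * b * r ^ 2 * cos φ) = r ^ 4 := by
  rw [koranyiGaugePow4, sq_div_add_sq_div_ellipsoidal ha hb hφ]
  field_simp
  linear_combination r ^ 4 * sin_sq_add_cos_sq φ

theorem horizX_numerator_ellipsoidal (ha : a ≠ 0) (hb : b ≠ 0) :
    (a * r * √(sin φ) * cos θ) * (r ^ 2 * sin φ) / a ^ 2 +
        (b * r * √(sin φ) * sin θ) * (a * b * r ^ 2 * cos φ) / (a ^ 2 * b ^ 2) =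
      r ^ 3 * √(sin φ) * sin (φ + θ) / a := by
  rw [sin_add]
  field_simp

end Ellipsoidal

/-- With `X = ∂/∂x + 2y ∂/∂t`, in Korányi ellipsoidal coordinates
`X u₀ = √(sin φ) sin(φ+θ) / (a r log A)`. -/
theorem stmt11 (a b A r φ θ : ℝ) (ha : 0 < a) (hb : 0 < b) (hA : 1 < A)
    (hr : 0 < r) (hφ : φ ∈ Set.Ioo 0 π)
    (u₀ : ℝ × ℝ × ℝ → ℝ)
    (hu : ∀ p : ℝ × ℝ × ℝ, u₀ p =
      Real.log ((p.1 ^ 2 / a ^ 2 + p.2.1 ^ 2 / b ^ 2) ^ 2 + p.2.2 ^ 2 / (a ^ 2 * b ^ 2)) /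
        (4 * Real.log A))
    (x y t : ℝ)
    (hx : x = a * r * Real.sqrt (Real.sin φ) * Real.cos θ)
    (hy : y = b * r * Real.sqrt (Real.sin φ) * Real.sin θ)
    (ht : t = a * b * r ^ 2 * Real.cos φ) :
    deriv (fun s => u₀ (x + s, y, t)) 0 + 2 * y * deriv (fun s => u₀ (x, y, t + s)) 0
      = Real.sqrt (Real.sin φ) * Real.sin (φ + θ) / (a * r * Real.log A) := by
  have hsin : 0 ≤ sin φ := (sin_pos_of_pos_of_lt_pi hφ.1 hφ.2).le
  have hu₀ : u₀ = fun p => log (koranyiGaugePow4 a b p.1 p.2.1 p.2.2) / (4 * log A) := funext hu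
  have hQ := koranyiGaugePow4_ellipsoidal (r := r) (θ := θ) ha.ne' hb.ne' hsin
  change horizX u₀ x y t = _
  subst hu₀ hx hy ht
  rw [horizX_div_const, horizX_log_koranyiGaugePow4 _ _ _ _ _ (by rw [hQ]; positivity), hQ,
    sq_div_add_sq_div_ellipsoidal ha.ne' hb.ne' hsin, horizX_numerator_ellipsoidal ha.ne' hb.ne']
  have hlog : log A ≠ 0 := (log_pos hA).ne'
  field_simp
end

section
/- For any Borel function ρ: 𝓔 → [0,∞] such that for all φ ∈ (0,π) and θ ∈ [0,2π], ∫₁^A ρ(Φ(r,φ,θ)) · ab / √( sin φ (b² sin²(φ+θ) + a² cos²(φ+θ)) ) dr ≥ 1, one has (1/(log A)³) sin²φ ((1/K) sin²(φ+θ) + K cos²(φ+θ))² ≤ ∫₁^A ρ⁴(Φ(r,φ,θ)) a²b² r³ dr for all such (φ,θ), where K = a/b and Φ is the Korányi ellipsoidal coordinate map. -/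
open Real MeasureTheory ENNReal

/-!
Along a radial line write the admissibility integrand as `(ρ w^{1/4}) · (c w^{-1/4})` with the
weight `w = a²b²r³` and `c = ab / √(sin φ (b² sin²(φ+θ) + a² cos²(φ+θ)))`, and apply Hölder's
inequality with exponents `4` and `4/3`. The conjugate factor is `∫₁^A c^{4/3} w^{-1/3} dr`,
which is a multiple of `∫₁^A dr/r = log A` because the weight grows like `r³`; the resulting
constant `c⁴ (log A)³ / (a²b²)` is exactly the reciprocal of the left-hand side.
-/

theorem lintegral_rpow_le_lintegral_rpow_mul_weight {α : Type*} [MeasurableSpace α]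
    {μ : Measure α} {p q : ℝ} (hpq : p.HolderConjugate q)
    {f w : α → ℝ≥0∞} (hf : AEMeasurable f μ) (hw : AEMeasurable w μ)
    (hw₀ : ∀ᵐ x ∂μ, w x ≠ 0) (hw_top : ∀ᵐ x ∂μ, w x ≠ ∞) :
    (∫⁻ x, f x ∂μ) ^ p ≤
      (∫⁻ x, f x ^ p * w x ∂μ) * (∫⁻ x, w x ^ (-(q / p)) ∂μ) ^ (p / q) := by
  have hp₀ : p ≠ 0 := hpq.ne_zero
  have hsplit : ∫⁻ x, f x ∂μ = ∫⁻ x, f x * w x ^ (1 / p) * w x ^ (-(1 / p)) ∂μ := by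
    refine lintegral_congr_ae ?_
    filter_upwards [hw₀, hw_top] with x hx₀ hx_top
    simp only [mul_assoc, ← ENNReal.rpow_add _ _ hx₀ hx_top,
      add_neg_cancel, ENNReal.rpow_zero, mul_one]
  have holder := ENNReal.lintegral_mul_le_Lp_mul_Lq μ hpq (hf.mul (hw.pow_const (1 / p)))
    (hw.pow_const (-(1 / p)))
  have hfirst : ∀ x, (f x * w x ^ (1 / p)) ^ p = f x ^ p * w x := fun x => by
    rw [ENNReal.mul_rpow_of_nonneg _ _ hpq.nonneg, ← ENNReal.rpow_mul, one_div_mul_cancel hp₀,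
      ENNReal.rpow_one]
  have hsecond : ∀ x, (w x ^ (-(1 / p))) ^ q = w x ^ (-(q / p)) := fun x => by
    rw [← ENNReal.rpow_mul]; ring_nf
  simp only [Pi.mul_apply, hfirst, hsecond, ← hsplit] at holder
  calc (∫⁻ x, f x ∂μ) ^ p
      ≤ ((∫⁻ x, f x ^ p * w x ∂μ) ^ (1 / p) * (∫⁻ x, w x ^ (-(q / p)) ∂μ) ^ (1 / q)) ^ p :=
        ENNReal.rpow_le_rpow holder hpq.nonneg
    _ = (∫⁻ x, f x ^ p * w x ∂μ) * (∫⁻ x, w x ^ (-(q / p)) ∂μ) ^ (p / q) := by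
        rw [ENNReal.mul_rpow_of_nonneg _ _ hpq.nonneg, ← ENNReal.rpow_mul, ← ENNReal.rpow_mul,
          one_div_mul_cancel hp₀, ENNReal.rpow_one, one_div_mul_eq_div]

theorem lintegral_Ioc_one_ofReal_inv {A : ℝ} (hA : 1 ≤ A) :
    ∫⁻ r in Set.Ioc 1 A, ENNReal.ofReal r⁻¹ = ENNReal.ofReal (Real.log A) := by
  have hint : IntegrableOn (fun r : ℝ => r⁻¹) (Set.Ioc 1 A) :=
    ((continuousOn_inv₀.mono fun x hx => (zero_lt_one.trans_le hx.1).ne').integrableOn_compact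
      isCompact_Icc).mono_set Set.Ioc_subset_Icc_self
  rw [← ofReal_integral_eq_lintegral_ofReal hint, ← intervalIntegral.integral_of_le hA,
    integral_inv_of_pos one_pos (zero_lt_one.trans_le hA), div_one]
  exact (ae_restrict_iff' measurableSet_Ioc).2 (.of_forall fun r hr =>
    inv_nonneg.2 (zero_le_one.trans hr.1.le))

theorem lintegral_Ioc_one_ofReal_const_mul_pow_three_rpow {A k : ℝ} (hA : 1 ≤ A) (hk : 0 < k) :
    (∫⁻ r in Set.Ioc 1 A, ENNReal.ofReal (k * r ^ 3) ^ (-(1 / 3 : ℝ))) ^ (3 : ℝ) =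
      ENNReal.ofReal (Real.log A ^ 3 / k) := by
  have hpt : Set.EqOn (fun r => ENNReal.ofReal (k * r ^ 3) ^ (-(1 / 3 : ℝ)))
      (fun r => ENNReal.ofReal (k ^ (-(1 / 3 : ℝ))) * ENNReal.ofReal r⁻¹) (Set.Ioc 1 A) := by
    intro r hr
    have hr₀ : 0 < r := zero_lt_one.trans hr.1
    dsimp only
    rw [ENNReal.ofReal_rpow_of_pos (by positivity), ← ENNReal.ofReal_mul (by positivity),
      Real.mul_rpow hk.le (by positivity), ← Real.rpow_natCast, ← Real.rpow_mul hr₀.le]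
    norm_num [Real.rpow_neg_one]
  have hlogA : 0 ≤ Real.log A := Real.log_nonneg hA
  rw [setLIntegral_congr_fun measurableSet_Ioc hpt, lintegral_const_mul _ (by fun_prop),
    lintegral_Ioc_one_ofReal_inv hA, ← ENNReal.ofReal_mul (by positivity),
    ENNReal.ofReal_rpow_of_nonneg (by positivity) (by norm_num),
    Real.mul_rpow (by positivity) hlogA, ← Real.rpow_mul hk.le]
  norm_num [Real.rpow_neg_one, div_eq_inv_mul]

theorem one_le_lintegral_Ioc_one_pow_four_mul_pow_three {A k c : ℝ} (hA : 1 ≤ A) (hk : 0 < k)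
    {F : ℝ → ℝ≥0∞} (hF : Measurable F) (hadm : 1 ≤ ∫⁻ r in Set.Ioc 1 A, F r * ENNReal.ofReal c) :
    1 ≤ (∫⁻ r in Set.Ioc 1 A, F r ^ 4 * ENNReal.ofReal (k * r ^ 3)) *
      (ENNReal.ofReal c ^ 4 * ENNReal.ofReal (Real.log A ^ 3 / k)) := by
  have hconj : (4 : ℝ).HolderConjugate (4 / 3) :=
    (Real.holderConjugate_iff_eq_conjExponent (by norm_num)).2 (by norm_num)
  have hweight : ∀ᵐ r ∂volume.restrict (Set.Ioc 1 A), ENNReal.ofReal (k * r ^ 3) ≠ 0 :=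
    (ae_restrict_iff' measurableSet_Ioc).2 (.of_forall fun r hr =>
      ENNReal.ofReal_ne_zero_iff.2 (by have := zero_lt_one.trans hr.1; positivity))
  have holder := lintegral_rpow_le_lintegral_rpow_mul_weight hconj hF.aemeasurable
    (by fun_prop) hweight (.of_forall fun _ => ENNReal.ofReal_ne_top)
  rw [show -((4 : ℝ) / 3 / 4) = -(1 / 3) by norm_num, show (4 : ℝ) / (4 / 3) = 3 by norm_num,
    lintegral_Ioc_one_ofReal_const_mul_pow_three_rpow hA hk] at holder
  simp only [ENNReal.rpow_ofNat] at holder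
  rw [lintegral_mul_const _ hF] at hadm
  calc 1 ≤ ((∫⁻ r in Set.Ioc 1 A, F r) * ENNReal.ofReal c) ^ 4 := one_le_pow₀ hadm
    _ = (∫⁻ r in Set.Ioc 1 A, F r) ^ 4 * ENNReal.ofReal c ^ 4 := mul_pow _ _ _
    _ ≤ (∫⁻ r in Set.Ioc 1 A, F r ^ 4 * ENNReal.ofReal (k * r ^ 3)) *
          ENNReal.ofReal (Real.log A ^ 3 / k) * ENNReal.ofReal c ^ 4 := by gcongr
    _ = _ := by ring

theorem sq_mul_sin_sq_add_sq_mul_cos_sq_pos {a b : ℝ} (ha : a ≠ 0) (hb : b ≠ 0) (x : ℝ) :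
    0 < b ^ 2 * Real.sin x ^ 2 + a ^ 2 * Real.cos x ^ 2 :=
  calc 0 < min (b ^ 2) (a ^ 2) := lt_min (by positivity) (by positivity)
    _ = min (b ^ 2) (a ^ 2) * Real.sin x ^ 2 + min (b ^ 2) (a ^ 2) * Real.cos x ^ 2 := by
      rw [← mul_add, Real.sin_sq_add_cos_sq, mul_one]
    _ ≤ _ := by gcongr; exacts [min_le_left _ _, min_le_right _ _]

theorem radial_holder_constant_mul_eq_one {a b L S s c : ℝ} (ha : 0 < a) (hb : 0 < b)
    (hL : L ≠ 0) (hS : 0 < S) (hD : 0 < b ^ 2 * s + a ^ 2 * c) :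
    1 / L ^ 3 * S ^ 2 * ((b / a) * s + (a / b) * c) ^ 2 *
      ((a * b / √(S * (b ^ 2 * s + a ^ 2 * c))) ^ 4 * (L ^ 3 / (a ^ 2 * b ^ 2))) = 1 := by
  have hK : (b / a) * s + (a / b) * c = (b ^ 2 * s + a ^ 2 * c) / (a * b) := by
    field_simp
  rw [hK, show 4 = 2 * 2 from rfl, pow_mul, div_pow (a * b), Real.sq_sqrt (mul_pos hS hD).le]
  field_simp

theorem ENNReal.ofReal_le_of_one_le_mul_ofReal {t m : ℝ} {x : ℝ≥0∞} (ht : 0 ≤ t)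
    (htm : t * m = 1) (h : 1 ≤ x * ENNReal.ofReal m) : ENNReal.ofReal t ≤ x :=
  calc ENNReal.ofReal t ≤ ENNReal.ofReal t * (x * ENNReal.ofReal m) :=
        le_mul_of_one_le_right' h
    _ = x * ENNReal.ofReal (t * m) := by rw [mul_left_comm, ← ENNReal.ofReal_mul ht]
    _ = x := by rw [htm, ENNReal.ofReal_one, mul_one]

/-- Hölder's inequality applied to the admissibility constraint along the radial
integral: for any admissible Borel `ρ : 𝓔 → [0,∞]`,
`(1/(log A)³) sin²φ ((1/K) sin²(φ+θ) + K cos²(φ+θ))² ≤ ∫₁^A ρ⁴(Φ(r,φ,θ)) a²b²r³ dr`,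
where `K = a/b`. -/
theorem stmt19 (a b A : ℝ) (hb : 0 < b) (hab : b < a) (hA : 1 < A)
    (Φ : ℝ → ℝ → ℝ → ℝ × ℝ × ℝ)
    (hΦ : ∀ r φ θ, Φ r φ θ =
      (a * r * Real.sqrt (Real.sin φ) * Real.cos θ,
       b * r * Real.sqrt (Real.sin φ) * Real.sin θ,
       a * b * r ^ 2 * Real.cos φ))
    (ρ : ℝ × ℝ × ℝ → ℝ≥0∞) (hρ : Measurable ρ)
    (hadm : ∀ φ θ : ℝ, φ ∈ Set.Ioo 0 π → θ ∈ Set.Icc 0 (2 * π) →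
      1 ≤ ∫⁻ r in Set.Ioc (1:ℝ) A, ρ (Φ r φ θ) *
        ENNReal.ofReal (a * b /
          Real.sqrt (Real.sin φ * (b ^ 2 * Real.sin (φ + θ) ^ 2 + a ^ 2 * Real.cos (φ + θ) ^ 2)))) :
    ∀ φ θ : ℝ, φ ∈ Set.Ioo 0 π → θ ∈ Set.Icc 0 (2 * π) →
      ENNReal.ofReal ((1 / Real.log A ^ 3) * Real.sin φ ^ 2 *
          ((b / a) * Real.sin (φ + θ) ^ 2 + (a / b) * Real.cos (φ + θ) ^ 2) ^ 2)
        ≤ ∫⁻ r in Set.Ioc (1:ℝ) A, (ρ (Φ r φ θ)) ^ 4 * ENNReal.ofReal (a ^ 2 * b ^ 2 * r ^ 3) := by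
  intro φ θ hφ hθ
  have ha : 0 < a := hb.trans hab
  have hS : 0 < Real.sin φ := Real.sin_pos_of_pos_of_lt_pi hφ.1 hφ.2
  have hlogA : 0 < Real.log A := Real.log_pos hA
  have hF : Measurable fun r => ρ (Φ r φ θ) := hρ.comp (by simp only [hΦ]; fun_prop)
  have hbound := one_le_lintegral_Ioc_one_pow_four_mul_pow_three (k := a ^ 2 * b ^ 2) hA.le
    (by positivity) hF (hadm φ θ hφ hθ)
  rw [← ENNReal.ofReal_pow (by positivity), ← ENNReal.ofReal_mul (by positivity)] at hbound
  exact ENNReal.ofReal_le_of_one_le_mul_ofReal (by positivity)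
    (radial_holder_constant_mul_eq_one ha hb hlogA.ne' hS
      (sq_mul_sin_sq_add_sq_mul_cos_sq_pos ha.ne' hb.ne' _)) hbound
end
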